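/- In a zone tariff with overlap areas, for any path W split at an intermediate node into W_1 + W_2, the zone counts satisfy z(W) ≤ z(W_1) + z(W_2) ≤ z(W) + 1. -/

import Mathlib

open scoped Classical

/-- A path in a graph given by adjacency relation `adj`: a nonempty list of
consecutively adjacent nodes. -/
def IsPath {V : Type*} (adj : V → V → Prop) (W : List V) : Prop :=
  W ≠ [] ∧ W.Chain' adj

/-- An `x`-`y`-path. -/
def IsXYPath {V : Type*} (adj : V → V → Prop) (x y : V) (W : List V) : Prop :=
  IsPath adj W ∧ W.head? = some x ∧ W.getLast? = some y

/-- `W` decomposes as the concatenation `W₁ + W₂` (the last node of `W₁` is the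
first node of `W₂`). -/
def Splits {V : Type*} (W W₁ W₂ : List V) : Prop :=
  W₁ ≠ [] ∧ W₂ ≠ [] ∧ W₁.getLast? = W₂.head? ∧ W = W₁ ++ W₂.tail

/-- `W` splits at an intermediate node into `W₁ + W₂` (both parts have at least
two nodes). -/
def SplitsAt {V : Type*} (W W₁ W₂ : List V) : Prop :=
  2 ≤ W₁.length ∧ 2 ≤ W₂.length ∧ W₁.getLast? = W₂.head? ∧ W = W₁ ++ W₂.tail

/-- The no-stopover property: splitting a path at an intermediate node never
decreases the total price. -/
def NoStopover {V : Type*} (adj : V → V → Prop) (p : List V → ℝ) : Prop :=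
  ∀ W W₁ W₂ : List V, IsPath adj W → IsPath adj W₁ → IsPath adj W₂ →
    SplitsAt W W₁ W₂ → p W ≤ p W₁ + p W₂

/-- The no-elongation property: removing the last node of a path never
increases the price. -/
def NoElongation {V : Type*} (adj : V → V → Prop) (p : List V → ℝ) : Prop :=
  ∀ W : List V, IsPath adj W → 2 ≤ W.length → p W.dropLast ≤ p W

/-- Number of consecutive zone changes in a zone assignment. -/
noncomputable def assignmentBorders {Z : Type*} : List Z → ℕ
  | x :: y :: rest => (if x = y then 0 else 1) + assignmentBorders (y :: rest)
  | _ => 0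

/-- An assignment of a zone to each station occurrence of a path, choosing for
each node one of the zones it belongs to. -/
def ValidAssign {V Z : Type*} (zones : V → Set Z) (W : List V) (h : List Z) : Prop :=
  List.Forall₂ (fun v z => z ∈ zones v) W h

/-- Number of zones visited by a path in a zone tariff with overlap areas:
one plus the minimum number of zone changes over all valid assignments. -/
noncomputable def zoaCount {V Z : Type*} (zones : V → Set Z) (W : List V) : ℕ :=
  1 + sInf { b | ∃ h : List Z, ValidAssign zones W h ∧ b = assignmentBorders h }

/-!
Glue optimal assignments along the shared node. An assignment of `W = W₁ + W₂` restricts to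
assignments of `W₁` and `W₂` that agree on the split node, so its zone changes are exactly
those of the two pieces: `z(W₁) + z(W₂) ≤ z(W) + 1`. Conversely, optimal assignments of
`W₁` and `W₂` may disagree on the split node; using the zone chosen for `W₁` there costs
`W₂` at most one extra zone change, whence `z(W) ≤ z(W₁) + z(W₂)`.
-/

theorem List.forall₂_append_left_iff {α β : Type*} {R : α → β → Prop} {l₁ l₂ : List α}
    {u : List β} :
    Forall₂ R (l₁ ++ l₂) u ↔ ∃ u₁ u₂, u = u₁ ++ u₂ ∧ Forall₂ R l₁ u₁ ∧ Forall₂ R l₂ u₂ := by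
  induction l₁ generalizing u with
  | nil => simp
  | cons a l₁ ih =>
    simp only [cons_append, forall₂_cons_left_iff, ih]
    constructor
    · rintro ⟨b, _, hab, ⟨u₁, u₂, rfl, h₁, h₂⟩, rfl⟩
      exact ⟨b :: u₁, u₂, rfl, ⟨b, u₁, hab, h₁, rfl⟩, h₂⟩
    · rintro ⟨_, u₂, rfl, ⟨b, u₁, hab, h₁, rfl⟩, h₂⟩
      exact ⟨b, u₁ ++ u₂, hab, ⟨u₁, u₂, rfl, h₁, h₂⟩, rfl⟩

section Borders

variable {Z : Type*}

theorem assignmentBorders_append_cons (b : List Z) (y : Z) (t : List Z) :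
    assignmentBorders (b ++ y :: t) = assignmentBorders (b ++ [y]) + assignmentBorders (y :: t) := by
  induction b with
  | nil => simp [assignmentBorders]
  | cons u b ih =>
    cases b with
    | nil => simp [assignmentBorders]
    | cons v b =>
      simp only [List.cons_append, assignmentBorders] at ih ⊢
      rw [ih]
      ring

theorem assignmentBorders_cons_le (y z : Z) (t : List Z) :
    assignmentBorders (y :: t) ≤ assignmentBorders (z :: t) + 1 := by
  cases t with
  | nil => simp [assignmentBorders]
  | cons c t => simp only [assignmentBorders]; split_ifs <;> omega

end Borders

section ZoaCount

variable {V Z : Type*} {zones : V → Set Z}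

theorem validAssign_append_cons_iff {a r : List V} {x : V} {h : List Z} :
    ValidAssign zones (a ++ x :: r) h ↔
      ∃ b y t, h = b ++ y :: t ∧ ValidAssign zones a b ∧ y ∈ zones x ∧ ValidAssign zones r t := by
  simp only [ValidAssign, List.forall₂_append_left_iff, List.forall₂_cons_left_iff]
  constructor
  · rintro ⟨b, _, rfl, hb, y, t, hy, ht, rfl⟩
    exact ⟨b, y, t, rfl, hb, hy, ht⟩
  · rintro ⟨b, y, t, rfl, hb, hy, ht⟩
    exact ⟨b, y :: t, rfl, hb, y, t, hy, ht, rfl⟩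

theorem zoaCount_le_of_validAssign {W : List V} {h : List Z} (hh : ValidAssign zones W h) :
    zoaCount zones W ≤ 1 + assignmentBorders h := by
  unfold zoaCount
  gcongr
  exact Nat.sInf_le ⟨h, hh, rfl⟩

theorem exists_validAssign (hz : ∀ v, (zones v).Nonempty) (W : List V) :
    ∃ h, ValidAssign zones W h :=
  ⟨W.map fun v => (hz v).some,
    List.forall₂_map_right_iff.2 (List.forall₂_same.2 fun v _ => (hz v).some_mem)⟩

theorem exists_validAssign_zoaCount_eq (hz : ∀ v, (zones v).Nonempty) (W : List V) :
    ∃ h, ValidAssign zones W h ∧ zoaCount zones W = 1 + assignmentBorders h := by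
  obtain ⟨h, hh⟩ := exists_validAssign hz W
  unfold zoaCount
  obtain ⟨h, hh, hmin⟩ := Nat.sInf_mem (⟨_, h, hh, rfl⟩ :
    {b | ∃ h, ValidAssign zones W h ∧ b = assignmentBorders h}.Nonempty)
  exact ⟨h, hh, by rw [hmin]⟩

theorem zoaCount_append_cons_le (hz : ∀ v, (zones v).Nonempty) (a : List V) (x : V) (r : List V) :
    zoaCount zones (a ++ x :: r) ≤ zoaCount zones (a ++ [x]) + zoaCount zones (x :: r) := by
  obtain ⟨g₁, hg₁, hz₁⟩ := exists_validAssign_zoaCount_eq hz (a ++ [x])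
  obtain ⟨b, y, _, rfl, hb, hy, hnil⟩ := validAssign_append_cons_iff.1 hg₁
  obtain rfl := List.forall₂_nil_left_iff.1 hnil
  obtain ⟨g₂, hg₂, hz₂⟩ := exists_validAssign_zoaCount_eq hz (x :: r)
  obtain ⟨z, t, -, ht, rfl⟩ := List.forall₂_cons_left_iff.1 hg₂
  calc zoaCount zones (a ++ x :: r)
      ≤ 1 + assignmentBorders (b ++ y :: t) :=
        zoaCount_le_of_validAssign (validAssign_append_cons_iff.2 ⟨b, y, t, rfl, hb, hy, ht⟩)
    _ = 1 + assignmentBorders (b ++ [y]) + assignmentBorders (y :: t) := by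
        rw [assignmentBorders_append_cons b y t]; ring
    _ ≤ 1 + assignmentBorders (b ++ [y]) + (assignmentBorders (z :: t) + 1) := by
        gcongr; exact assignmentBorders_cons_le y z t
    _ = zoaCount zones (a ++ [x]) + zoaCount zones (x :: r) := by rw [hz₁, hz₂]; ring

theorem zoaCount_add_le_append_cons (hz : ∀ v, (zones v).Nonempty) (a : List V) (x : V) (r : List V) :
    zoaCount zones (a ++ [x]) + zoaCount zones (x :: r) ≤ zoaCount zones (a ++ x :: r) + 1 := by
  obtain ⟨h, hh, hzW⟩ := exists_validAssign_zoaCount_eq hz (a ++ x :: r)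
  obtain ⟨b, y, t, rfl, hb, hy, ht⟩ := validAssign_append_cons_iff.1 hh
  calc zoaCount zones (a ++ [x]) + zoaCount zones (x :: r)
      ≤ (1 + assignmentBorders (b ++ [y])) + (1 + assignmentBorders (y :: t)) :=
        add_le_add
          (zoaCount_le_of_validAssign (validAssign_append_cons_iff.2 ⟨b, y, [], rfl, hb, hy, .nil⟩))
          (zoaCount_le_of_validAssign (.cons hy ht))
    _ = zoaCount zones (a ++ x :: r) + 1 := by rw [hzW, assignmentBorders_append_cons b y t]; ring

end ZoaCount

theorem Splits.exists_eq_append_cons {V : Type*} {W W₁ W₂ : List V} (hs : Splits W W₁ W₂) :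
    ∃ a x r, W₁ = a ++ [x] ∧ W₂ = x :: r ∧ W = a ++ x :: r := by
  obtain ⟨h₁, h₂, hlast, rfl⟩ := hs
  obtain ⟨a, y, rfl⟩ := (List.eq_nil_or_concat' _).resolve_left h₁
  obtain ⟨x, r, rfl⟩ := List.exists_cons_of_ne_nil h₂
  obtain rfl : y = x := by simpa using hlast
  exact ⟨a, y, r, rfl, rfl, by simp⟩

theorem SplitsAt.splits {V : Type*} {W W₁ W₂ : List V} (hs : SplitsAt W W₁ W₂) :
    Splits W W₁ W₂ := by
  obtain ⟨h₁, h₂, hlast, hW⟩ := hs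
  exact ⟨List.ne_nil_of_length_pos (by omega), List.ne_nil_of_length_pos (by omega), hlast, hW⟩

theorem zoa_split_count_general {V Z : Type*} (zones : V → Set Z)
    (hz : ∀ v, (zones v).Nonempty)
    (W W₁ W₂ : List V) (hsplit : SplitsAt W W₁ W₂) :
    zoaCount zones W ≤ zoaCount zones W₁ + zoaCount zones W₂ ∧
      zoaCount zones W₁ + zoaCount zones W₂ ≤ zoaCount zones W + 1 := by
  obtain ⟨a, x, r, rfl, rfl, rfl⟩ := hsplit.splits.exists_eq_append_cons
  exact ⟨zoaCount_append_cons_le hz a x r, zoaCount_add_le_append_cons hz a x r⟩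

/-- In a zone tariff with overlap areas, for any path `W` split at an
intermediate node into `W₁ + W₂`, the zone counts satisfy
`z(W) ≤ z(W₁) + z(W₂) ≤ z(W) + 1`. -/
theorem zoa_split_count {V Z : Type*} (adj : V → V → Prop) (zones : V → Set Z)
    (hz : ∀ v, (zones v).Nonempty)
    (W W₁ W₂ : List V) (hW : IsPath adj W) (hW₁ : IsPath adj W₁)
    (hW₂ : IsPath adj W₂) (hsplit : SplitsAt W W₁ W₂) :
    zoaCount zones W ≤ zoaCount zones W₁ + zoaCount zones W₂ ∧
      zoaCount zones W₁ + zoaCount zones W₂ ≤ zoaCount zones W + 1 :=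
  zoa_split_count_general zones hz W W₁ W₂ hsplit
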